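/- For integers k ≥ r ≥ 1 and l ≥ 1, the generating function of the (l,r)-Stirling numbers of the second kind satisfies ∑_{n≥k} S2(n,k)·z^n = z^k / ∏_{i=r}^{k} (1 − z·i^l), as an identity of formal power series in z. -/

import Mathlib

/-! Multiplying the generating function `Φₖ = ∑ₙ S2(n,k) zⁿ` by `1 - kˡ z` turns the defining
recurrence into `Φₖ (1 - kˡ z) = z Φₖ₋₁` for `k > r`, and into `Φᵣ (1 - rˡ z) = zʳ` at the bottom
row. Telescoping gives `Φₖ ∏_{i=r}^{k} (1 - iˡ z) = zᵏ`, and the product is invertible since its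
constant coefficient is `1`. -/

/-- The `(l,r)`-Stirling numbers of the second kind. -/
def S2 (l r : ℕ) : ℕ → ℕ → ℕ
  | n, k =>
    if _h1 : n < r then 0
    else if _h2 : n = r then (if k = r then 1 else 0)
    else S2 l r (n - 1) (k - 1) + k ^ l * S2 l r (n - 1) k
termination_by n _ => n
decreasing_by all_goals omega

open PowerSeries

section Recurrence

variable (l r : ℕ)

lemma S2_eq_zero_of_lt {n : ℕ} (k : ℕ) (h : n < r) : S2 l r n k = 0 := by
  rw [S2, dif_pos h]

lemma S2_self (k : ℕ) : S2 l r r k = if k = r then 1 else 0 := by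
  rw [S2, dif_neg (by omega), dif_pos rfl]

lemma S2_succ_of_le {n : ℕ} (k : ℕ) (h : r ≤ n) :
    S2 l r (n + 1) k = S2 l r n (k - 1) + k ^ l * S2 l r n k := by
  rw [S2, dif_neg (by omega), dif_neg (by omega)]
  rfl

/-- Unlike the defining recurrence this holds for every `n`: the initial row enters as the
indicator term. -/
lemma S2_succ (n k : ℕ) :
    S2 l r (n + 1) k =
      S2 l r n (k - 1) + k ^ l * S2 l r n k + if n + 1 = r ∧ k = r then 1 else 0 := by
  rcases lt_trichotomy (n + 1) r with h | h | h
  · simp [S2_eq_zero_of_lt l r _ h, S2_eq_zero_of_lt l r _ (Nat.lt_of_succ_lt h), h.ne]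
  · have hn : n < r := by omega
    rw [h, S2_self l r k, S2_eq_zero_of_lt l r _ hn, S2_eq_zero_of_lt l r _ hn]
    simp
  · rw [S2_succ_of_le l r k (by omega), if_neg (by omega), add_zero]

lemma S2_eq_zero_of_lt_right {k : ℕ} (n : ℕ) (hk : k < r) : S2 l r n k = 0 := by
  induction n generalizing k with
  | zero => exact S2_eq_zero_of_lt l r k (by omega)
  | succ n ih =>
    rw [S2_succ l r, ih (by omega), ih hk, if_neg (by omega)]
    simp

end Recurrence

section GeneratingFunction

variable (R : Type*) [CommRing R] (l r : ℕ)

noncomputable def S2Series (k : ℕ) : R⟦X⟧ :=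
  mk fun n => (S2 l r n k : R)

variable {r}

lemma S2Series_eq_X_mul (hr : 1 ≤ r) (k : ℕ) :
    S2Series R l r k =
      X * (S2Series R l r (k - 1) + C ((k : R) ^ l) * S2Series R l r k +
        if k = r then X ^ (r - 1) else 0) := by
  ext (_ | n)
  · simp [S2Series, S2_eq_zero_of_lt l r k (show 0 < r by omega)]
  · simp only [coeff_succ_X_mul, map_add, coeff_C_mul, S2Series, coeff_mk, S2_succ l r,
      Nat.cast_add, Nat.cast_mul, Nat.cast_pow, Nat.cast_ite, Nat.cast_one, Nat.cast_zero]
    by_cases hk : k = r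
    · simp only [hk, and_true, if_true, coeff_X_pow, show n + 1 = r ↔ n = r - 1 by omega]
    · simp [hk]

lemma S2Series_mul_one_sub (hr : 1 ≤ r) (k : ℕ) :
    S2Series R l r k * (1 - C ((k : R) ^ l) * X) =
      X * S2Series R l r (k - 1) + if k = r then X ^ r else 0 := by
  have hX : (X : R⟦X⟧) ^ r = X * X ^ (r - 1) := by rw [← pow_succ', Nat.sub_add_cancel hr]
  have h := S2Series_eq_X_mul R l hr k
  split_ifs at h ⊢
  · linear_combination h - hX
  · linear_combination h

lemma S2Series_eq_zero_of_lt {k : ℕ} (hk : k < r) : S2Series R l r k = 0 := by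
  ext n
  simp [S2Series, S2_eq_zero_of_lt_right l r n hk]

lemma S2Series_mul_prod (hr : 1 ≤ r) {k : ℕ} (hk : r ≤ k) :
    S2Series R l r k * ∏ i ∈ Finset.Icc r k, (1 - C ((i : R) ^ l) * X) = X ^ k := by
  induction k, hk using Nat.le_induction with
  | base =>
    rw [Finset.Icc_self, Finset.prod_singleton, S2Series_mul_one_sub R l hr,
      S2Series_eq_zero_of_lt R l (Nat.sub_lt hr one_pos), if_pos rfl, mul_zero, zero_add]
  | succ k hk ih =>
    have hstep := S2Series_mul_one_sub R l hr (k + 1)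
    rw [if_neg (by omega), add_zero, Nat.add_sub_cancel, Nat.cast_succ] at hstep
    rw [Finset.prod_Icc_succ_top (by omega), Nat.cast_succ, ← mul_assoc, mul_right_comm,
      hstep, mul_assoc, ih, pow_succ']

end GeneratingFunction

open PowerSeries in
theorem stmt11_general (l r k : ℕ) (hr : 1 ≤ r) (hk : r ≤ k) :
    PowerSeries.mk (fun n => (S2 l r n k : ℚ)) =
      (PowerSeries.X : PowerSeries ℚ) ^ k *
        (∏ i ∈ Finset.Icc r k,
          (1 - PowerSeries.C (R := ℚ) ((i : ℚ) ^ l) * PowerSeries.X))⁻¹ := by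
  rw [PowerSeries.eq_mul_inv_iff_mul_eq]
  · exact S2Series_mul_prod ℚ l hr hk
  · simp [map_prod]

open PowerSeries in
theorem stmt11 (l r k : ℕ) (hr : 1 ≤ r) (hk : r ≤ k) (hl : 1 ≤ l) :
    PowerSeries.mk (fun n => (S2 l r n k : ℚ)) =
      (PowerSeries.X : PowerSeries ℚ) ^ k *
        (∏ i ∈ Finset.Icc r k,
          (1 - PowerSeries.C (R := ℚ) ((i : ℚ) ^ l) * PowerSeries.X))⁻¹ :=
  stmt11_general l r k hr hk
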